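/- A nonempty subset A of the pseudo MV-algebra M = Γ(G,u) is a summand-ideal of M if and only if A = ↓a for some Boolean element a ∈ M; in that case there is a unique Boolean element a ∈ A with A = ↓a, and A^⊥ = ↓a' where a' := u − a. -/

import Mathlib

variable {G : Type*} [Lattice G] [AddGroup G]
  [CovariantClass G G (· + ·) (· ≤ ·)]
  [CovariantClass G G (Function.swap (· + ·)) (· ≤ ·)]

/-- `u` is a strong unit of the lattice-ordered group `G`. -/
def IsStrongUnit (u : G) : Prop := 0 ≤ u ∧ ∀ x : G, ∃ n : ℕ, x ≤ n • u

/-- The operation `x ⊕ y := (x + y) ⊓ u` of the pseudo MV-algebra `Γ(G,u)`. -/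
def oplus (u x y : G) : G := (x + y) ⊓ u

/-- The operation `x ⊙ y := (x - u + y) ⊔ 0` of the pseudo MV-algebra `Γ(G,u)`. -/
def odot (u x y : G) : G := (x - u + y) ⊔ 0

/-- `n.x := x ⊕ ⋯ ⊕ x` (`n` summands), with `0.x = 0`. -/
def nOplus (u : G) : ℕ → G → G
  | 0, _ => 0
  | n + 1, x => oplus u (nOplus u n x) x

/-- `I` is an ideal of the pseudo MV-algebra with carrier `C ⊆ Γ(G,u)`:
a nonempty subset of `C`, downward closed within `C`, and closed under `⊕`. -/
def IsIdealIn (u : G) (C I : Set G) : Prop :=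
  I ⊆ C ∧ I.Nonempty ∧ (∀ x ∈ I, ∀ y ∈ C, y ≤ x → y ∈ I) ∧
    ∀ x ∈ I, ∀ y ∈ I, oplus u x y ∈ I

/-- `I` is a normal ideal: `x ⊕ I = I ⊕ x` for all `x ∈ C`. -/
def IsNormalIdealIn (u : G) (C I : Set G) : Prop :=
  IsIdealIn u C I ∧ ∀ x ∈ C, (fun i => oplus u x i) '' I = (fun i => oplus u i x) '' I

/-- `⟨X⟩_n`, the smallest normal ideal (of the carrier `C`) containing `X`. -/
def normalGenIn (u : G) (C X : Set G) : Set G :=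
  ⋂₀ {I | IsNormalIdealIn u C I ∧ X ⊆ I}

/-- The polar `X^⊥ = {y ∈ C : y ∧ x = 0 for all x ∈ X}` computed in carrier `C`. -/
def polarIn (C X : Set G) : Set G := {y ∈ C | ∀ x ∈ X, y ⊓ x = 0}

/-- `A ⊕ B := {a ⊕ b : a ∈ A, b ∈ B}`. -/
def setOplus (u : G) (A B : Set G) : Set G := Set.image2 (oplus u) A B

/-- `↓a` computed within the carrier `C`. -/
def dsetIn (C : Set G) (a : G) : Set G := {x ∈ C | x ≤ a}

/-- `I` is a summand-ideal of the carrier `C`: a normal ideal such that for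
some normal ideal `J`, `I ∩ J = {0}` and `⟨I ∪ J⟩_n = C`. -/
def IsSummandIdealIn (u : G) (C I : Set G) : Prop :=
  IsNormalIdealIn u C I ∧ ∃ J, IsNormalIdealIn u C J ∧ I ∩ J = {0} ∧
    normalGenIn u C (I ∪ J) = C

/-- `I` is a polar ideal of the carrier `C`: `I = I^⊥⊥`. -/
def IsPolarIdealIn (C I : Set G) : Prop := polarIn C (polarIn C I) = I

/-- `a` is a Boolean element of the carrier `C`: `a ∈ C` and `a ⊕ a = a`. -/
def IsBooleanIn (u : G) (C : Set G) (a : G) : Prop := a ∈ C ∧ oplus u a a = a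

/-- The carrier `C` is strongly projectable: every polar ideal is a summand-ideal. -/
def IsStronglyProjectableIn (u : G) (C : Set G) : Prop :=
  ∀ I : Set G, IsPolarIdealIn C I → IsSummandIdealIn u C I

/-- `N` is a subalgebra of `Γ(G,u)`: contains `0` and `u`, closed under `⊕`,
`x⁻ = u - x` and `x∼ = -x + u`. -/
def IsSubalg (u : G) (N : Set G) : Prop :=
  N ⊆ Set.Icc 0 u ∧ 0 ∈ N ∧ u ∈ N ∧
    (∀ x ∈ N, ∀ y ∈ N, oplus u x y ∈ N) ∧
    (∀ x ∈ N, u - x ∈ N) ∧ (∀ x ∈ N, -x + u ∈ N)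

/-- `N` is a large subalgebra of `Γ(G,u)`: for every nonzero `y ∈ Γ(G,u)` there
are `n ∈ ℕ` and a nonzero `x ∈ N` with `x ≤ n.y`. -/
def IsLargeSubalg (u : G) (N : Set G) : Prop :=
  IsSubalg u N ∧ ∀ y ∈ Set.Icc (0 : G) u, y ≠ 0 →
    ∃ n : ℕ, ∃ x ∈ N, x ≠ 0 ∧ x ≤ nOplus u n y

/-!
A Boolean element `a` is disjoint from its complement `u - a`, so `a` commutes with everything
below `u - a`; this makes `↓a` and `↓(u - a)` normal ideals whose join contains
`a ⊕ (u - a) = u`. Conversely, the join of two normal ideals `A` and `J` is the set of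
elements below some `a ⊕ b` with `a ∈ A`, `b ∈ J`; if `A ⊞ J = M` this gives `u ≤ a ⊕ b`
with `a ∧ b = 0`, from which `a` is Boolean and `A = ↓a`.
-/

section LatticeOrderedGroup

variable {α : Type*} [Lattice α] [AddGroup α]

theorem add_comm_of_inf_eq_zero [AddLeftMono α] [AddRightMono α] {s t : α} (h : s ⊓ t = 0) :
    s + t = t + s := by
  have h0 : -s ⊔ -t = 0 := by rw [← neg_inf, h, neg_zero]
  have e1 : s + (-s ⊔ -t) + t = t ⊔ s := by rw [add_sup, sup_add]; simp [add_assoc]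
  have e2 : t + (-s ⊔ -t) + s = t ⊔ s := by rw [add_sup, sup_add]; simp [add_assoc]
  rw [h0, add_zero] at e1 e2
  exact e1.trans e2.symm

theorem inf_eq_zero_of_le_of_le {x y s t : α} (hx : 0 ≤ x) (hy : 0 ≤ y) (hxs : x ≤ s)
    (hyt : y ≤ t) (h : s ⊓ t = 0) : x ⊓ y = 0 :=
  le_antisymm ((inf_le_inf hxs hyt).trans_eq h) (le_inf hx hy)

theorem le_neg_add_of_inf_eq_zero [AddLeftMono α] [AddRightMono α] {y a u : α} (h : y ⊓ a = 0)
    (hy : y ≤ u) (ha : a ≤ u) : y ≤ -a + u :=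
  calc y = -(y ⊓ a) + y := by rw [h, neg_zero, zero_add]
    _ = 0 ⊔ (-a + y) := by rw [neg_inf, sup_add, neg_add_cancel]
    _ ≤ -a + u := sup_le (le_neg_add_iff_le.mpr ha) (add_le_add_right hy _)

variable {u : α}

theorem oplus_mono [AddLeftMono α] [AddRightMono α] {x x' y y' : α} (hx : x ≤ x')
    (hy : y ≤ y') : oplus u x y ≤ oplus u x' y' :=
  inf_le_inf_right u (add_le_add hx hy)

theorem oplus_mem_Icc [AddLeftMono α] {x y : α} (hu : 0 ≤ u) (hx : 0 ≤ x) (hy : 0 ≤ y) :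
    oplus u x y ∈ Set.Icc 0 u :=
  ⟨le_inf (add_nonneg hx hy) hu, inf_le_right⟩

theorem le_oplus_of_nonneg_right [AddLeftMono α] {x y : α} (hx : x ≤ u) (hy : 0 ≤ y) :
    x ≤ oplus u x y :=
  le_inf (le_add_of_nonneg_right hy) hx

theorem le_oplus_of_nonneg_left [AddRightMono α] {x y : α} (hx : 0 ≤ x) (hy : y ≤ u) :
    y ≤ oplus u x y :=
  le_inf (le_add_of_nonneg_left hx) hy

theorem oplus_assoc [AddLeftMono α] [AddRightMono α] {x z : α} (y : α) (hx : 0 ≤ x)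
    (hz : 0 ≤ z) :
    oplus u (oplus u x y) z = oplus u x (oplus u y z) := by
  simp only [oplus]
  rw [inf_add, add_inf, ← add_assoc, inf_assoc, inf_assoc,
    inf_eq_right.mpr (le_add_of_nonneg_right hz), inf_eq_right.mpr (le_add_of_nonneg_left hx)]

theorem oplus_self_eq_self_iff [AddLeftMono α] {a : α} :
    oplus u a a = a ↔ a ⊓ (-a + u) = 0 := by
  have h : oplus u a a = a + a ⊓ (-a + u) := by
    rw [add_inf, add_neg_cancel_left]
    rfl
  rw [h, add_eq_left]

theorem image_oplus_left_dsetIn [AddLeftMono α] [AddRightMono α] {x s : α} (hx : x ≤ u)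
    (hs : s ≤ u) :
    (fun i => oplus u x i) '' dsetIn (Set.Icc 0 u) s = Set.Icc x (oplus u x s) := by
  ext w
  constructor
  · rintro ⟨i, ⟨hi, his⟩, rfl⟩
    exact ⟨le_oplus_of_nonneg_right hx hi.1, oplus_mono le_rfl his⟩
  · rintro ⟨hxw, hws⟩
    have hd : -x + w ≤ s := neg_add_le_iff_le_add.mpr (hws.trans inf_le_left)
    refine ⟨-x + w, ⟨⟨le_neg_add_iff_le.mpr hxw, hd.trans hs⟩, hd⟩, ?_⟩
    simp only [oplus, add_neg_cancel_left]
    exact inf_eq_left.mpr (hws.trans inf_le_right)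

theorem image_oplus_right_dsetIn [AddLeftMono α] [AddRightMono α] {x s : α} (hx : x ≤ u)
    (hs : s ≤ u) :
    (fun i => oplus u i x) '' dsetIn (Set.Icc 0 u) s = Set.Icc x (oplus u s x) := by
  ext w
  constructor
  · rintro ⟨i, ⟨hi, his⟩, rfl⟩
    exact ⟨le_oplus_of_nonneg_left hi.1 hx, oplus_mono his le_rfl⟩
  · rintro ⟨hxw, hws⟩
    have hd : w - x ≤ s := sub_le_iff_le_add.mpr (hws.trans inf_le_left)
    refine ⟨w - x, ⟨⟨sub_nonneg.mpr hxw, hd.trans hs⟩, hd⟩, ?_⟩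
    simp only [oplus, sub_add_cancel]
    exact inf_eq_left.mpr (hws.trans inf_le_right)

variable {C I : Set α} {a : α}

theorem IsIdealIn.dsetIn_subset (hI : IsIdealIn u C I) {a : α} (ha : a ∈ I) :
    dsetIn C a ⊆ I :=
  fun x hx => hI.2.2.1 a ha x hx.1 hx.2

theorem IsIdealIn.zero_mem (hI : IsIdealIn u (Set.Icc 0 u) I) : (0 : α) ∈ I := by
  obtain ⟨a, ha⟩ := hI.2.1
  exact hI.2.2.1 a ha 0 ⟨le_rfl, (hI.1 ha).1.trans (hI.1 ha).2⟩ (hI.1 ha).1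

theorem IsNormalIdealIn.exists_oplus_left_eq (hI : IsNormalIdealIn u C I) {x i : α}
    (hx : x ∈ C) (hi : i ∈ I) : ∃ j ∈ I, oplus u x i = oplus u j x := by
  obtain ⟨j, hj, h⟩ : oplus u x i ∈ (fun k => oplus u k x) '' I :=
    hI.2 x hx ▸ ⟨i, hi, rfl⟩
  exact ⟨j, hj, h.symm⟩

theorem IsNormalIdealIn.exists_oplus_right_eq (hI : IsNormalIdealIn u C I) {x i : α}
    (hx : x ∈ C) (hi : i ∈ I) : ∃ j ∈ I, oplus u i x = oplus u x j := by
  obtain ⟨j, hj, h⟩ : oplus u i x ∈ (fun k => oplus u x k) '' I :=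
    (hI.2 x hx).symm ▸ ⟨i, hi, rfl⟩
  exact ⟨j, hj, h.symm⟩

/-- Since ideals are downward closed, normality only has to be checked up to `≤`. -/
theorem IsIdealIn.isNormalIdealIn [AddLeftMono α] [AddRightMono α]
    (hI : IsIdealIn u (Set.Icc 0 u) I)
    (hleft : ∀ x ∈ Set.Icc 0 u, ∀ i ∈ I, ∃ j ∈ I, oplus u x i ≤ oplus u j x)
    (hright : ∀ x ∈ Set.Icc 0 u, ∀ i ∈ I, ∃ j ∈ I, oplus u i x ≤ oplus u x j) :
    IsNormalIdealIn u (Set.Icc 0 u) I := by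
  refine ⟨hI, fun x hx => Set.Subset.antisymm ?_ ?_⟩
  · rintro _ ⟨i, hi, rfl⟩
    obtain ⟨j, hj, hle⟩ := hleft x hx i hi
    have hmem : oplus u x i ∈ (fun k => oplus u k x) '' dsetIn (Set.Icc 0 u) j := by
      rw [image_oplus_right_dsetIn hx.2 (hI.1 hj).2]
      exact ⟨le_oplus_of_nonneg_right hx.2 (hI.1 hi).1, hle⟩
    exact Set.image_mono (hI.dsetIn_subset hj) hmem
  · rintro _ ⟨i, hi, rfl⟩
    obtain ⟨j, hj, hle⟩ := hright x hx i hi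
    have hmem : oplus u i x ∈ (fun k => oplus u x k) '' dsetIn (Set.Icc 0 u) j := by
      rw [image_oplus_left_dsetIn hx.2 (hI.1 hj).2]
      exact ⟨le_oplus_of_nonneg_left (hI.1 hi).1 hx.2, hle⟩
    exact Set.image_mono (hI.dsetIn_subset hj) hmem

theorem IsIdealIn.inf_mem (hI : IsIdealIn u (Set.Icc 0 u) I) {x y : α} (hx : x ∈ I)
    (hy : 0 ≤ y) : x ⊓ y ∈ I :=
  hI.2.2.1 x hx _ ⟨le_inf (hI.1 hx).1 hy, inf_le_left.trans (hI.1 hx).2⟩ inf_le_left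

theorem dsetIn_Icc_self : dsetIn (Set.Icc 0 u) u = Set.Icc 0 u :=
  Set.ext fun _ => ⟨fun h => h.1, fun h => ⟨h, h.2⟩⟩

theorem IsBooleanIn.inf_neg_add_eq_zero [AddLeftMono α] (ha : IsBooleanIn u C a) :
    a ⊓ (-a + u) = 0 :=
  oplus_self_eq_self_iff.mp ha.2

theorem isBooleanIn_self [AddLeftMono α] (hu : 0 ≤ u) : IsBooleanIn u (Set.Icc 0 u) u :=
  ⟨⟨hu, le_rfl⟩, oplus_self_eq_self_iff.mpr (by rw [neg_add_cancel, inf_eq_right.mpr hu])⟩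

section Boolean

variable [AddLeftMono α] [AddRightMono α]

theorem IsBooleanIn.neg_add_eq_sub (ha : IsBooleanIn u C a) : -a + u = u - a :=
  eq_sub_of_add_eq (by rw [← add_comm_of_inf_eq_zero ha.inf_neg_add_eq_zero, add_neg_cancel_left])

theorem IsBooleanIn.inf_sub_eq_zero (ha : IsBooleanIn u C a) : a ⊓ (u - a) = 0 :=
  ha.neg_add_eq_sub ▸ ha.inf_neg_add_eq_zero

theorem IsBooleanIn.sub (ha : IsBooleanIn u (Set.Icc 0 u) a) :
    IsBooleanIn u (Set.Icc 0 u) (u - a) := by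
  refine ⟨⟨sub_nonneg.mpr ha.1.2, sub_le_self u ha.1.1⟩, oplus_self_eq_self_iff.mpr ?_⟩
  rw [neg_sub, sub_add_cancel, inf_comm]
  exact ha.inf_sub_eq_zero

theorem IsBooleanIn.oplus_comm (ha : IsBooleanIn u (Set.Icc 0 u) a) {x : α} (hx : 0 ≤ x) :
    oplus u x a = oplus u a x := by
  have hdisj : x ⊓ (u - a) ⊓ a = 0 :=
    inf_eq_zero_of_le_of_le (le_inf hx ha.sub.1.1) ha.1.1 inf_le_right le_rfl
      (inf_comm a _ ▸ ha.inf_sub_eq_zero)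
  calc oplus u x a = x ⊓ (u - a) + a := by rw [oplus, inf_add, sub_add_cancel]
    _ = a + x ⊓ (u - a) := add_comm_of_inf_eq_zero hdisj
    _ = oplus u a x := by rw [← ha.neg_add_eq_sub, add_inf, add_neg_cancel_left, oplus]

theorem IsBooleanIn.isIdealIn_dsetIn (ha : IsBooleanIn u (Set.Icc 0 u) a) :
    IsIdealIn u (Set.Icc 0 u) (dsetIn (Set.Icc 0 u) a) :=
  ⟨fun _ hx => hx.1, ⟨a, ha.1, le_rfl⟩, fun _ hx _ hy hyx => ⟨hy, hyx.trans hx.2⟩,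
    fun _ hx _ hy => ⟨oplus_mem_Icc (ha.1.1.trans ha.1.2) hx.1.1 hy.1.1,
      (oplus_mono hx.2 hy.2).trans_eq ha.2⟩⟩

theorem IsBooleanIn.isNormalIdealIn_dsetIn (ha : IsBooleanIn u (Set.Icc 0 u) a) :
    IsNormalIdealIn u (Set.Icc 0 u) (dsetIn (Set.Icc 0 u) a) :=
  ha.isIdealIn_dsetIn.isNormalIdealIn
    (fun _ hx _ hi =>
      ⟨a, ⟨ha.1, le_rfl⟩, (oplus_mono le_rfl hi.2).trans_eq (ha.oplus_comm hx.1)⟩)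
    (fun _ hx _ hi =>
      ⟨a, ⟨ha.1, le_rfl⟩, (oplus_mono hi.2 le_rfl).trans_eq (ha.oplus_comm hx.1).symm⟩)

theorem IsBooleanIn.isSummandIdealIn_dsetIn (ha : IsBooleanIn u (Set.Icc 0 u) a) :
    IsSummandIdealIn u (Set.Icc 0 u) (dsetIn (Set.Icc 0 u) a) := by
  have hu : 0 ≤ u := ha.1.1.trans ha.1.2
  refine ⟨ha.isNormalIdealIn_dsetIn, _, ha.sub.isNormalIdealIn_dsetIn, ?_, ?_⟩
  · refine Set.Subset.antisymm (fun z ⟨hza, hzb⟩ => ?_) ?_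
    · rw [Set.mem_singleton_iff, ← inf_idem z]
      exact inf_eq_zero_of_le_of_le hza.1.1 hza.1.1 hza.2 hzb.2 ha.inf_sub_eq_zero
    · rintro _ rfl
      exact ⟨⟨⟨le_rfl, hu⟩, ha.1.1⟩, ⟨⟨le_rfl, hu⟩, ha.sub.1.1⟩⟩
  · have hC := (isBooleanIn_self hu).isNormalIdealIn_dsetIn
    rw [dsetIn_Icc_self] at hC
    refine Set.Subset.antisymm (Set.sInter_subset_of_mem
      ⟨hC, Set.union_subset (fun _ hx => hx.1) (fun _ hx => hx.1)⟩) fun z hz => ?_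
    rintro K ⟨hK, hsub⟩
    have hu_eq : oplus u a (u - a) = u := by
      rw [oplus, ← ha.neg_add_eq_sub, add_neg_cancel_left, inf_idem]
    have huK : u ∈ K := hu_eq ▸ hK.1.2.2.2 a (hsub (Or.inl ⟨ha.1, le_rfl⟩))
      (u - a) (hsub (Or.inr ⟨ha.sub.1, le_rfl⟩))
    exact hK.1.dsetIn_subset huK ⟨hz, hz.2⟩

theorem IsBooleanIn.polarIn_dsetIn (ha : IsBooleanIn u (Set.Icc 0 u) a) :
    polarIn (Set.Icc 0 u) (dsetIn (Set.Icc 0 u) a) = dsetIn (Set.Icc 0 u) (u - a) := by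
  ext y
  refine ⟨fun ⟨hy, hya⟩ => ⟨hy, ?_⟩, fun ⟨hy, hyb⟩ => ⟨hy, fun x hx => ?_⟩⟩
  · rw [← ha.neg_add_eq_sub]
    exact le_neg_add_of_inf_eq_zero (hya a ⟨ha.1, le_rfl⟩) hy.2 ha.1.2
  · exact inf_eq_zero_of_le_of_le hy.1 hx.1.1 hyb hx.2 (inf_comm a _ ▸ ha.inf_sub_eq_zero)

end Boolean

section Join

variable {J : Set α}

/-- The ideal generated by `I ∪ J`, when `I` is normal. -/
def idealSup (u : α) (I J : Set α) : Set α :=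
  {z ∈ Set.Icc 0 u | ∃ a ∈ I, ∃ b ∈ J, z ≤ oplus u a b}

theorem oplus_mem_idealSup [AddLeftMono α] (hI : I ⊆ Set.Icc 0 u) (hJ : J ⊆ Set.Icc 0 u)
    {b : α} (ha : a ∈ I) (hb : b ∈ J) : oplus u a b ∈ idealSup u I J :=
  ⟨oplus_mem_Icc ((hI ha).1.trans (hI ha).2) (hI ha).1 (hJ hb).1, a, ha, b, hb, le_rfl⟩

theorem subset_idealSup (hI : IsIdealIn u (Set.Icc 0 u) I) (hJ : IsIdealIn u (Set.Icc 0 u) J) :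
    I ∪ J ⊆ idealSup u I J := by
  rintro z (hz | hz)
  · refine ⟨hI.1 hz, z, hz, 0, hJ.zero_mem, ?_⟩
    rw [oplus, add_zero, inf_eq_left.mpr (hI.1 hz).2]
  · refine ⟨hJ.1 hz, 0, hI.zero_mem, z, hz, ?_⟩
    rw [oplus, zero_add, inf_eq_left.mpr (hJ.1 hz).2]

theorem isIdealIn_idealSup [AddLeftMono α] [AddRightMono α]
    (hI : IsNormalIdealIn u (Set.Icc 0 u) I)
    (hJ : IsIdealIn u (Set.Icc 0 u) J) : IsIdealIn u (Set.Icc 0 u) (idealSup u I J) := by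
  refine ⟨fun _ hz => hz.1, ⟨0, subset_idealSup hI.1 hJ (Or.inl hI.1.zero_mem)⟩, ?_, ?_⟩
  · rintro z ⟨-, a, ha, b, hb, hz⟩ y hy hyz
    exact ⟨hy, a, ha, b, hb, hyz.trans hz⟩
  · rintro z ⟨hz, a, ha, b, hb, hzab⟩ z' ⟨hz', a', ha', b', hb', hzab'⟩
    obtain ⟨a'', ha'', hswap⟩ := hI.exists_oplus_left_eq (hJ.1 hb) ha'
    have hu : 0 ≤ u := hz.1.trans hz.2
    have h0 : ∀ {x}, x ∈ I ∪ J → 0 ≤ x := fun hx => (Set.union_subset hI.1.1 hJ.1 hx).1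
    refine ⟨oplus_mem_Icc hu hz.1 hz'.1, ?_⟩
    refine ⟨oplus u a a'', hI.1.2.2.2 a ha a'' ha'', oplus u b b', hJ.2.2.2 b hb b' hb', ?_⟩
    calc oplus u z z' ≤ oplus u (oplus u a b) (oplus u a' b') := oplus_mono hzab hzab'
      _ = oplus u a (oplus u (oplus u b a') b') := by
        rw [oplus_assoc _ (h0 (.inl ha)) (oplus_mem_Icc hu (h0 (.inl ha')) (h0 (.inr hb'))).1,
          oplus_assoc _ (h0 (.inr hb)) (h0 (.inr hb'))]
      _ = oplus u (oplus u a a'') (oplus u b b') := by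
        rw [hswap, oplus_assoc _ (h0 (.inl ha'')) (h0 (.inr hb')),
          ← oplus_assoc _ (h0 (.inl ha)) (oplus_mem_Icc hu (h0 (.inr hb)) (h0 (.inr hb'))).1]

theorem isNormalIdealIn_idealSup [AddLeftMono α] [AddRightMono α]
    (hI : IsNormalIdealIn u (Set.Icc 0 u) I) (hJ : IsNormalIdealIn u (Set.Icc 0 u) J) :
    IsNormalIdealIn u (Set.Icc 0 u) (idealSup u I J) := by
  have h0 : ∀ {x}, x ∈ I ∪ J → 0 ≤ x := fun hx => (Set.union_subset hI.1.1 hJ.1.1 hx).1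
  refine (isIdealIn_idealSup hI hJ.1).isNormalIdealIn ?_ ?_
  · rintro x hx z ⟨-, a, ha, b, hb, hz⟩
    obtain ⟨a', ha', hxa⟩ := hI.exists_oplus_left_eq hx ha
    obtain ⟨b', hb', hxb⟩ := hJ.exists_oplus_left_eq hx hb
    refine ⟨oplus u a' b', oplus_mem_idealSup hI.1.1 hJ.1.1 ha' hb', ?_⟩
    calc oplus u x z ≤ oplus u x (oplus u a b) := oplus_mono le_rfl hz
      _ = oplus u a' (oplus u x b) := by
        rw [← oplus_assoc _ hx.1 (h0 (.inr hb)), hxa,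
          oplus_assoc _ (h0 (.inl ha')) (h0 (.inr hb))]
      _ = oplus u (oplus u a' b') x := by
        rw [hxb, oplus_assoc _ (h0 (.inl ha')) hx.1]
  · rintro x hx z ⟨-, a, ha, b, hb, hz⟩
    obtain ⟨a', ha', hxa⟩ := hI.exists_oplus_right_eq hx ha
    obtain ⟨b', hb', hxb⟩ := hJ.exists_oplus_right_eq hx hb
    refine ⟨oplus u a' b', oplus_mem_idealSup hI.1.1 hJ.1.1 ha' hb', ?_⟩
    calc oplus u z x ≤ oplus u (oplus u a b) x := oplus_mono hz le_rfl
      _ = oplus u (oplus u a x) b' := by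
        rw [oplus_assoc _ (h0 (.inl ha)) hx.1, hxb,
          oplus_assoc _ (h0 (.inl ha)) (h0 (.inr hb'))]
      _ = oplus u x (oplus u a' b') := by
        rw [hxa, oplus_assoc _ hx.1 (h0 (.inr hb'))]

end Join

theorem IsSummandIdealIn.exists_isBooleanIn [AddLeftMono α] [AddRightMono α] {A : Set α}
    (h : IsSummandIdealIn u (Set.Icc 0 u) A) :
    ∃ a ∈ A, IsBooleanIn u (Set.Icc 0 u) a ∧ A = dsetIn (Set.Icc 0 u) a := by
  obtain ⟨hA, J, hJ, hAJ, hgen⟩ := h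
  have hdisj : ∀ x ∈ A, ∀ y ∈ J, x ⊓ y = 0 := fun x hx y hy => by
    have hmem : x ⊓ y ∈ A ∩ J :=
      ⟨hA.1.inf_mem hx (hJ.1.1 hy).1, inf_comm y x ▸ hJ.1.inf_mem hy (hA.1.1 hx).1⟩
    rwa [hAJ] at hmem
  have hu : u ∈ idealSup u A J := by
    have hgen_u : u ∈ normalGenIn u (Set.Icc 0 u) (A ∪ J) := by
      rw [hgen]
      exact ⟨(hA.1.1 hA.1.zero_mem).2, le_rfl⟩
    exact Set.mem_sInter.mp hgen_u _ ⟨isNormalIdealIn_idealSup hA hJ, subset_idealSup hA.1 hJ.1⟩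
  obtain ⟨-, a, haA, b, hbJ, hab⟩ := hu
  have ha := hA.1.1 haA
  have hu_le : u ≤ a + b := hab.trans inf_le_left
  have hbool : IsBooleanIn u (Set.Icc 0 u) a :=
    ⟨ha, oplus_self_eq_self_iff.mpr (inf_eq_zero_of_le_of_le ha.1 (le_neg_add_iff_le.mpr ha.2)
      le_rfl (neg_add_le_iff_le_add.mpr hu_le) (hdisj a haA b hbJ))⟩
  refine ⟨a, haA, hbool,
    Set.Subset.antisymm (fun x hx => ⟨hA.1.1 hx, ?_⟩) (hA.1.dsetIn_subset haA)⟩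
  have hx_le : x ≤ b + a :=
    add_comm_of_inf_eq_zero (hdisj a haA b hbJ) ▸ (hA.1.1 hx).2.trans hu_le
  simpa using le_neg_add_of_inf_eq_zero (hdisj x hx b hbJ) hx_le (le_add_of_nonneg_right ha.1)

end LatticeOrderedGroup

theorem stmt9_general (u : G) (A : Set G) :
    (IsSummandIdealIn u (Set.Icc (0 : G) u) A ↔
      ∃ a : G, IsBooleanIn u (Set.Icc (0 : G) u) a ∧ A = dsetIn (Set.Icc (0 : G) u) a) ∧
    (IsSummandIdealIn u (Set.Icc (0 : G) u) A →
      ∃! a : G, a ∈ A ∧ IsBooleanIn u (Set.Icc (0 : G) u) a ∧ A = dsetIn (Set.Icc (0 : G) u) a ∧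
        polarIn (Set.Icc (0 : G) u) A = dsetIn (Set.Icc (0 : G) u) (u - a)) := by
  refine ⟨⟨fun h => ?_, ?_⟩, fun h => ?_⟩
  · obtain ⟨a, -, ha, hA⟩ := h.exists_isBooleanIn
    exact ⟨a, ha, hA⟩
  · rintro ⟨a, ha, rfl⟩
    exact ha.isSummandIdealIn_dsetIn
  · obtain ⟨a, haA, ha, hA⟩ := h.exists_isBooleanIn
    refine ⟨a, ⟨haA, ha, hA, hA ▸ ha.polarIn_dsetIn⟩, ?_⟩
    rintro a' ⟨ha'A, -, hA', -⟩
    exact le_antisymm (hA ▸ ha'A).2 (hA' ▸ haA).2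

theorem stmt9 (u : G) (hu : IsStrongUnit u) (A : Set G)
    (hA : A ⊆ Set.Icc (0 : G) u) (hne : A.Nonempty) :
    (IsSummandIdealIn u (Set.Icc (0 : G) u) A ↔
      ∃ a : G, IsBooleanIn u (Set.Icc (0 : G) u) a ∧ A = dsetIn (Set.Icc (0 : G) u) a) ∧
    (IsSummandIdealIn u (Set.Icc (0 : G) u) A →
      ∃! a : G, a ∈ A ∧ IsBooleanIn u (Set.Icc (0 : G) u) a ∧ A = dsetIn (Set.Icc (0 : G) u) a ∧
        polarIn (Set.Icc (0 : G) u) A = dsetIn (Set.Icc (0 : G) u) (u - a)) :=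
  stmt9_general u A
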